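/- arXiv:1810.04704 — 5 statements merged into one kernel-verified Lean document; each statement's English description precedes it below -/
import Mathlib

section
/- Let P be a nonempty countable partial order and let 𝒟 be a family of subsets of P such that Max_p ∈ 𝒟 for every p ∈ P. Then each set N_p is clopen in Gen(P,𝒟), and the family {N_p : p ∈ P} is a basis for the topology of Gen(P,𝒟): every open subset of Gen(P,𝒟) is a union of sets of the form N_p. -/
/-- A point `x : P → Bool`, viewed as the characteristic function of a subset of `P`,
is a filter on the partial order `P`: upward closed and downward directed. -/
def IsPOFilter {P : Type*} [PartialOrder P] (x : P → Bool) : Prop :=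
  (∀ p q : P, x p = true → p ≤ q → x q = true) ∧
  (∀ p q : P, x p = true → x q = true → ∃ r : P, x r = true ∧ r ≤ p ∧ r ≤ q)

/-- `Gen P 𝒟` : the set of (characteristic functions of) filters on `P` meeting
every member of the family `𝒟` of subsets of `P`, as a subset of `2^P = P → Bool`. -/
def Gen (P : Type*) [PartialOrder P] (𝒟 : Set (Set P)) : Set (P → Bool) :=
  {x | IsPOFilter x ∧ ∀ D ∈ 𝒟, ∃ p ∈ D, x p = true}

/-- Two elements of a partial order are compatible if they have a common lower bound. -/
def Compat {P : Type*} [PartialOrder P] (p q : P) : Prop :=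
  ∃ r : P, r ≤ p ∧ r ≤ q

/-- `MaxSet p = {q : q ≤ p or q ⊥ p}`. -/
def MaxSet {P : Type*} [PartialOrder P] (p : P) : Set P :=
  {q | q ≤ p ∨ ¬ Compat q p}

/-- For `p ∈ P`, the basic set `N_p = {G ∈ Gen(P,𝒟) : p ∈ G}`, as a subset of the
subspace `Gen P 𝒟`. -/
def NSet {P : Type*} [PartialOrder P] (𝒟 : Set (Set P)) (p : P) : Set (Gen P 𝒟) :=
  {G | (G : P → Bool) p = true}

/-- A filter contains a common lower bound for any finite subset of itself. -/
lemma filter_finset_lb {P : Type*} [PartialOrder P] {x : P → Bool} (hx : IsPOFilter x)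
    {p0 : P} (hp0 : x p0 = true) (T : Finset P) (hT : ∀ q ∈ T, x q = true) :
    ∃ r : P, x r = true ∧ ∀ q ∈ T, r ≤ q := by
  classical
  induction T using Finset.induction_on with
  | empty => exact ⟨p0, hp0, fun q hq => absurd hq (Finset.notMem_empty q)⟩
  | @insert a T ha ih =>
    obtain ⟨r, hr, hrT⟩ := ih (fun q hq => hT q (Finset.mem_insert_of_mem hq))
    obtain ⟨r', hr', hr'r, hr'a⟩ := hx.2 r a hr (hT a (Finset.mem_insert_self a T))
    exact ⟨r', hr', fun q hq => by
      rcases Finset.mem_insert.mp hq with h | h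
      · exact h ▸ hr'a
      · exact le_trans hr'r (hrT q h)⟩

/-- Key lemma: for `G ∈ Gen P 𝒟` and a finite set `F` of coordinates, there is `p ∈ G`
such that every `H ∈ Gen P 𝒟` containing `p` agrees with `G` on `F`. -/
lemma key {P : Type*} [PartialOrder P] (𝒟 : Set (Set P)) (hmax : ∀ p : P, MaxSet p ∈ 𝒟)
    {G : P → Bool} (hG : G ∈ Gen P 𝒟) [Nonempty P] (F : Finset P) :
    ∃ p : P, G p = true ∧ ∀ H ∈ Gen P 𝒟, H p = true → ∀ q ∈ F, H q = G q := by
  classical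
  obtain ⟨a⟩ := ‹Nonempty P›
  obtain ⟨p0, _, hp0⟩ := hG.2 (MaxSet a) (hmax a)
  -- for each q with G q = false, pick s q ∈ G incompatible with q
  have hsel : ∀ q : P, G q = false → ∃ s : P, G s = true ∧ ¬ Compat s q := by
    intro q hq
    obtain ⟨s, hsM, hsG⟩ := hG.2 (MaxSet q) (hmax q)
    rcases hsM with h | h
    · exact absurd (hG.1.1 s q hsG h) (by simp [hq])
    · exact ⟨s, hsG, h⟩
  let s : P → P := fun q => if h : G q = false then (hsel q h).choose else a
  have hsG : ∀ q : P, G q = false → G (s q) = true ∧ ¬ Compat (s q) q := by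
    intro q hq
    simp only [s, dif_pos hq]
    exact (hsel q hq).choose_spec
  let Ft := F.filter (fun q => G q = true)
  let Ff := F.filter (fun q => G q = false)
  obtain ⟨r, hrG, hrT⟩ := filter_finset_lb hG.1 hp0 Ft
    (fun q hq => (Finset.mem_filter.mp hq).2)
  obtain ⟨p, hpG, hpT⟩ := filter_finset_lb hG.1 hp0 (insert r (Ff.image s))
    (by
      intro q hq
      rcases Finset.mem_insert.mp hq with h | h
      · exact h ▸ hrG
      · obtain ⟨b, hb, rfl⟩ := Finset.mem_image.mp h
        exact (hsG b (Finset.mem_filter.mp hb).2).1)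
  refine ⟨p, hpG, fun H hH hHp q hq => ?_⟩
  cases hGq : G q with
  | true =>
    have hrq : r ≤ q := hrT q (Finset.mem_filter.mpr ⟨hq, hGq⟩)
    have hpr : p ≤ r := hpT r (Finset.mem_insert_self _ _)
    exact hH.1.1 p q hHp (le_trans hpr hrq)
  | false =>
    by_contra hne
    have hHq : H q = true := by simpa [hGq] using hne
    have hps : p ≤ s q := hpT (s q)
      (Finset.mem_insert_of_mem (Finset.mem_image_of_mem s (Finset.mem_filter.mpr ⟨hq, hGq⟩)))
    obtain ⟨t, htH, htp, htq⟩ := hH.1.2 p q hHp hHq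
    exact (hsG q hGq).2 ⟨t, le_trans htp hps, htq⟩

/-- If `P` is a nonempty countable partial order and `𝒟` contains `Max_p` for every `p`,
then each `N_p` is clopen in `Gen(P,𝒟)` and the `N_p` form a basis: every open subset of
`Gen(P,𝒟)` is a union of sets of the form `N_p`. -/
theorem stmt2 {P : Type*} [PartialOrder P] [Countable P] [Nonempty P]
    (𝒟 : Set (Set P)) (hmax : ∀ p : P, MaxSet p ∈ 𝒟) :
    (∀ p : P, IsClopen (NSet 𝒟 p)) ∧
    (∀ U : Set (Gen P 𝒟), IsOpen U → ∃ S : Set P, U = ⋃ p ∈ S, NSet 𝒟 p) := by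
  constructor
  · intro p
    have : NSet 𝒟 p = (fun G : Gen P 𝒟 => (G : P → Bool) p) ⁻¹' {true} := by
      ext G; simp [NSet]
    rw [this]
    exact (isClopen_discrete {true}).preimage ((continuous_apply p).comp continuous_subtype_val)
  · intro U hU
    refine ⟨{p | NSet 𝒟 p ⊆ U}, Set.Subset.antisymm ?_ ?_⟩
    · intro G hGU
      obtain ⟨V, hV, rfl⟩ := isOpen_induced_iff.mp hU
      obtain ⟨I, u, hu, hsub⟩ := isOpen_pi_iff.mp hV (G : P → Bool) hGU
      obtain ⟨p, hpG, hp⟩ := key 𝒟 hmax G.2 I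
      refine Set.mem_biUnion (show p ∈ _ from ?_) (show G ∈ NSet 𝒟 p from hpG)
      intro H hHp
      apply hsub
      intro q hq
      rw [hp (H : P → Bool) H.2 hHp q hq]
      exact (hu q hq).2
    · intro G hG
      obtain ⟨p, hp, hGp⟩ := Set.mem_iUnion₂.mp hG
      exact hp hGp
end

section
/- Let P be a nonempty countable partial order and let 𝒟 be a countable family of dense subsets of P such that Max_p ∈ 𝒟 for every p ∈ P. Then the space Gen(P,𝒟) has no isolated points if and only if P is atomless. -/
/-- A subset `D` of a partial order is dense if every element has a lower bound in `D`. -/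
def DenseBelow {P : Type*} [PartialOrder P] (D : Set P) : Prop :=
  ∀ p : P, ∃ q ∈ D, q ≤ p

/-- A partial order is atomless if below every element there are two incompatible
elements. -/
def AtomlessPO (P : Type*) [PartialOrder P] : Prop :=
  ∀ p : P, ∃ q r : P, q ≤ p ∧ r ≤ p ∧ ¬ Compat q r

section Aux

variable {P : Type*} [PartialOrder P]

/-- If a filter meets every `MaxSet` and misses `q`, it contains an element
incompatible with `q`. -/
lemma gen_mem_of_max {𝒟 : Set (Set P)} (hmax : ∀ p : P, MaxSet p ∈ 𝒟)
    {x : P → Bool} (hx : x ∈ Gen P 𝒟) {q : P} (hq : x q = false) :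
    ∃ r, x r = true ∧ ¬ Compat r q := by
  obtain ⟨r, hr, hrt⟩ := hx.2 _ (hmax q)
  rcases hr with h | h
  · exact absurd (hx.1.1 _ _ hrt h) (by simp [hq])
  · exact ⟨r, hrt, h⟩

lemma gen_nonempty {𝒟 : Set (Set P)} [Nonempty P] (hmax : ∀ p : P, MaxSet p ∈ 𝒟)
    {x : P → Bool} (hx : x ∈ Gen P 𝒟) : ∃ e, x e = true := by
  obtain ⟨p⟩ := (inferInstance : Nonempty P)
  obtain ⟨r, _, hrt⟩ := hx.2 _ (hmax p)
  exact ⟨r, hrt⟩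

/-- Separation lemma: an element of `G` below all finitely many members of `G`
in `s` and incompatible with all non-members of `G` in `s`. -/
lemma gen_sep {𝒟 : Set (Set P)} [Nonempty P] (hmax : ∀ p : P, MaxSet p ∈ 𝒟)
    {x : P → Bool} (hx : x ∈ Gen P 𝒟) (s : Finset P) :
    ∃ p₀, x p₀ = true ∧ ∀ a ∈ s,
      (x a = true → p₀ ≤ a) ∧ (x a = false → ¬ Compat p₀ a) := by
  classical
  induction s using Finset.induction_on with
  | empty =>
      obtain ⟨e, he⟩ := gen_nonempty hmax hx
      exact ⟨e, he, by simp⟩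
  | @insert a s ha ih =>
      obtain ⟨p₀, hp₀, hprop⟩ := ih
      cases hxa : x a with
      | false =>
          obtain ⟨q, hqt, hq⟩ := gen_mem_of_max hmax hx hxa
          obtain ⟨p₁, hp₁t, hle₀, hleq⟩ := hx.1.2 p₀ q hp₀ hqt
          refine ⟨p₁, hp₁t, ?_⟩
          intro b hb
          rcases Finset.mem_insert.mp hb with rfl | hb
          · refine ⟨fun h => by rw [h] at hxa; exact absurd hxa (by simp),
              fun _ hc => ?_⟩
            obtain ⟨u, hu1, hu2⟩ := hc
            exact hq ⟨u, le_trans hu1 hleq, hu2⟩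
          · refine ⟨fun h => le_trans hle₀ ((hprop b hb).1 h), fun h hc => ?_⟩
            obtain ⟨u, hu1, hu2⟩ := hc
            exact (hprop b hb).2 h ⟨u, le_trans hu1 hle₀, hu2⟩
      | true =>
          obtain ⟨p₁, hp₁t, hle₀, hlea⟩ := hx.1.2 p₀ a hp₀ hxa
          refine ⟨p₁, hp₁t, ?_⟩
          intro b hb
          rcases Finset.mem_insert.mp hb with rfl | hb
          · exact ⟨fun _ => hlea, fun h => by rw [h] at hxa; exact absurd hxa (by simp)⟩
          · refine ⟨fun h => le_trans hle₀ ((hprop b hb).1 h), fun h hc => ?_⟩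
            obtain ⟨u, hu1, hu2⟩ := hc
            exact (hprop b hb).2 h ⟨u, le_trans hu1 hle₀, hu2⟩

/-- Rasiowa–Sikorski: there is a generic filter containing any given `p`. -/
lemma gen_exists {𝒟 : Set (Set P)} (h𝒟 : 𝒟.Countable)
    (hdense : ∀ D ∈ 𝒟, DenseBelow D) (hmax : ∀ p : P, MaxSet p ∈ 𝒟) (p : P) :
    ∃ x, x ∈ Gen P 𝒟 ∧ x p = true := by
  classical
  have hne : 𝒟.Nonempty := ⟨_, hmax p⟩
  obtain ⟨f, hf⟩ := Set.Countable.exists_eq_range h𝒟 hne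
  have hfD : ∀ n, f n ∈ 𝒟 := fun n => hf ▸ ⟨n, rfl⟩
  have hstep : ∀ (q : P) (n : ℕ), ∃ r, r ∈ f n ∧ r ≤ q := by
    intro q n
    obtain ⟨r, hr1, hr2⟩ := hdense (f n) (hfD n) q
    exact ⟨r, hr1, hr2⟩
  choose g hg1 hg2 using hstep
  let seq : ℕ → P := fun n => Nat.rec (g p 0) (fun n s => g s (n + 1)) n
  have hseq0 : seq 0 = g p 0 := rfl
  have hseqS : ∀ n, seq (n + 1) = g (seq n) (n + 1) := fun n => rfl
  have hseqD : ∀ n, seq n ∈ f n := by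
    intro n
    cases n with
    | zero => exact hg1 p 0
    | succ n => rw [hseqS]; exact hg1 _ _
  have hanti : Antitone seq := by
    apply antitone_nat_of_succ_le
    intro n
    rw [hseqS]
    exact hg2 _ _
  refine ⟨fun q => @decide (∃ n, seq n ≤ q) (Classical.propDecidable _), ?_, ?_⟩
  · refine ⟨⟨?_, ?_⟩, ?_⟩
    · intro a b hab hle
      simp only [decide_eq_true_iff] at *
      obtain ⟨n, hn⟩ := hab
      exact ⟨n, le_trans hn hle⟩
    · intro a b hab hbb
      simp only [decide_eq_true_iff] at hab hbb
      obtain ⟨n, hn⟩ := hab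
      obtain ⟨m, hm⟩ := hbb
      refine ⟨seq (max n m), ?_, le_trans (hanti (le_max_left n m)) hn,
        le_trans (hanti (le_max_right n m)) hm⟩
      simp only [decide_eq_true_iff]
      exact ⟨max n m, le_rfl⟩
    · intro D hD
      obtain ⟨n, hn⟩ := (hf ▸ hD : D ∈ Set.range f)
      refine ⟨seq n, ?_, ?_⟩
      · rw [← hn]; exact hseqD n
      · simp only [decide_eq_true_iff]; exact ⟨n, le_rfl⟩
  · simp only [decide_eq_true_iff]
    refine ⟨0, ?_⟩
    rw [hseq0]
    exact hg2 p 0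

/-- If below `p` everything is pairwise compatible, then membership in any generic
filter containing `p` is determined: `q ∈ G ↔ q` compatible with `p`. -/
lemma atom_char {𝒟 : Set (Set P)} (hmax : ∀ p : P, MaxSet p ∈ 𝒟)
    {p : P} (hp : ∀ q r : P, q ≤ p → r ≤ p → Compat q r)
    {x : P → Bool} (hx : x ∈ Gen P 𝒟) (hxp : x p = true) (q : P) :
    x q = true ↔ Compat q p := by
  constructor
  · intro hq
    obtain ⟨r, _, hr1, hr2⟩ := hx.1.2 q p hq hxp
    exact ⟨r, hr1, hr2⟩
  · rintro ⟨s, hsq, hsp⟩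
    by_contra h
    have hq : x q = false := by
      revert h; cases x q <;> simp
    obtain ⟨r, hrt, hr⟩ := gen_mem_of_max hmax hx hq
    obtain ⟨t, _, ht1, ht2⟩ := hx.1.2 r p hrt hxp
    obtain ⟨u, hu1, hu2⟩ := hp t s ht2 hsp
    exact hr ⟨u, le_trans hu1 ht1, le_trans hu2 hsq⟩

end Aux

/-- Let `P` be a nonempty countable partial order and `𝒟` a countable family of dense
subsets of `P` containing `Max_p` for every `p`. Then the space `Gen(P,𝒟)` has no
isolated points if and only if `P` is atomless. -/
theorem stmt4 {P : Type*} [PartialOrder P] [Countable P] [Nonempty P]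
    (𝒟 : Set (Set P)) (h𝒟 : 𝒟.Countable) (hdense : ∀ D ∈ 𝒟, DenseBelow D)
    (hmax : ∀ p : P, MaxSet p ∈ 𝒟) :
    (∀ G : Gen P 𝒟, ¬ IsOpen ({G} : Set (Gen P 𝒟))) ↔ AtomlessPO P := by
  classical
  constructor
  · -- no isolated points → atomless
    intro hiso p
    by_contra h
    push_neg at h
    -- h : ∀ q r, q ≤ p → r ≤ p → Compat q r
    obtain ⟨G, hG, hGp⟩ := gen_exists h𝒟 hdense hmax p
    apply hiso ⟨G, hG⟩
    have hset : ({⟨G, hG⟩} : Set (Gen P 𝒟)) =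
        Subtype.val ⁻¹' ((fun x : P → Bool => x p) ⁻¹' {true}) := by
      ext ⟨H, hH⟩
      simp only [Set.mem_singleton_iff, Set.mem_preimage, Set.mem_setOf_eq,
        Subtype.mk.injEq, Set.mem_singleton_iff]
      constructor
      · rintro rfl; exact hGp
      · intro hHp
        funext q
        rw [Bool.eq_iff_iff, atom_char hmax h hH hHp q, atom_char hmax h hG hGp q]
    rw [hset]
    exact ((isOpen_discrete _).preimage (continuous_apply p)).preimage
      continuous_subtype_val
  · -- atomless → no isolated points
    rintro hatom ⟨G, hG⟩ hopen
    rw [isOpen_induced_iff] at hopen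
    obtain ⟨U, hU, hUeq⟩ := hopen
    have hGU : G ∈ U := by
      have h1 : (⟨G, hG⟩ : Gen P 𝒟) ∈ Subtype.val ⁻¹' U := by
        rw [hUeq]; rfl
      exact h1
    rw [isOpen_pi_iff] at hU
    obtain ⟨I, u, h1, h2⟩ := hU G hGU
    have hpi : ∀ x : P → Bool, (∀ a ∈ I, x a = G a) → x ∈ U := by
      intro x hxa
      apply h2
      intro a ha
      rw [hxa a ha]
      exact (h1 a ha).2
    obtain ⟨p₀, hp₀, hsep⟩ := gen_sep hmax hG I
    have key : ∀ s : P, s ≤ p₀ → ∀ H, H ∈ Gen P 𝒟 → H s = true → H = G := by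
      intro s hs H hH hHs
      have hHp₀ : H p₀ = true := hH.1.1 s p₀ hHs hs
      have hagree : ∀ a ∈ I, H a = G a := by
        intro a ha
        cases hGa : G a with
        | false =>
            by_contra hne
            have hHa : H a = true := by
              revert hne; cases H a <;> simp
            obtain ⟨t, _, ht1, ht2⟩ := hH.1.2 p₀ a hHp₀ hHa
            exact (hsep a ha).2 hGa ⟨t, ht1, ht2⟩
        | true =>
            exact hH.1.1 p₀ a hHp₀ ((hsep a ha).1 hGa)
      have hHU : H ∈ U := hpi H hagree
      have hmem : (⟨H, hH⟩ : Gen P 𝒟) ∈ ({⟨G, hG⟩} : Set (Gen P 𝒟)) := by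
        rw [← hUeq]; exact hHU
      have := Set.mem_singleton_iff.mp hmem
      exact congrArg Subtype.val this
    obtain ⟨q, r, hqp, hrp, hqr⟩ := hatom p₀
    obtain ⟨Hq, hHq, hHqq⟩ := gen_exists h𝒟 hdense hmax q
    obtain ⟨Hr, hHr, hHrr⟩ := gen_exists h𝒟 hdense hmax r
    have hq : G q = true := by rw [← key q hqp Hq hHq hHqq]; exact hHqq
    have hr : G r = true := by rw [← key r hrp Hr hHr hHrr]; exact hHrr
    obtain ⟨t, _, ht1, ht2⟩ := hG.1.2 q r hq hr
    exact hqr ⟨t, ht1, ht2⟩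
end

section
/- Let P be a nonempty countable atomless partial order and let 𝒟 be a countable family of dense subsets of P such that Max_p ∈ 𝒟 for every p ∈ P. Then the space Gen(P,𝒟) is uncountable. -/
/-- Let `P` be a nonempty countable atomless partial order and `𝒟` a countable family of
dense subsets of `P` containing `Max_p` for every `p`. Then the space `Gen(P,𝒟)` is
uncountable. -/
theorem stmt5 {P : Type*} [PartialOrder P] [Countable P] [Nonempty P]
    (hatomless : AtomlessPO P)
    (𝒟 : Set (Set P)) (h𝒟 : 𝒟.Countable) (hdense : ∀ D ∈ 𝒟, DenseBelow D)
    (hmax : ∀ p : P, MaxSet p ∈ 𝒟) :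
    ¬ (Gen P 𝒟).Countable := by
  classical
  -- enumerate 𝒟
  have hne : 𝒟.Nonempty := ⟨MaxSet (Classical.arbitrary P), hmax _⟩
  obtain ⟨Dfun, hDfun⟩ := (Set.Countable.exists_eq_range h𝒟 hne)
  have hDmem : ∀ n, Dfun n ∈ 𝒟 := fun n => hDfun ▸ Set.mem_range_self n
  -- choice functions: densify and split
  have hdchoice : ∀ (p : P) (n : ℕ), ∃ q, q ∈ Dfun n ∧ q ≤ p := fun p n =>
    hdense (Dfun n) (hDmem n) p
  choose dfun hdfun_mem hdfun_le using hdchoice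
  choose s0 s1 hs0 hs1 hs01 using hatomless
  -- the splitting: given p at level n, children
  let child : P → ℕ → Bool → P := fun p n b => if b then s1 (dfun p n) else s0 (dfun p n)
  have hchild_le : ∀ p n b, child p n b ≤ dfun p n := by
    intro p n b
    rcases b with _ | _
    · exact hs0 _
    · exact hs1 _
  have hchild_incompat : ∀ p n b b', b ≠ b' →
      ¬ Compat (child p n b) (child p n b') := by
    intro p n b b' hbb' ⟨r, hr1, hr2⟩
    rcases b with _ | _ <;> rcases b' with _ | _ <;> simp_all [child]
    · exact hs01 _ ⟨r, hr1, hr2⟩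
    · exact hs01 _ ⟨r, hr2, hr1⟩
  -- the chain for a branch s : ℕ → Bool
  let c : (ℕ → Bool) → ℕ → P := fun s => fun n =>
    Nat.rec (Classical.arbitrary P) (fun n p => child p n (s n)) n
  have hc_succ : ∀ s n, c s (n + 1) = child (c s n) n (s n) := fun s n => rfl
  have hc_anti : ∀ s, Antitone (c s) := by
    intro s
    apply antitone_nat_of_succ_le
    intro n
    exact le_trans (hchild_le _ _ _) (hdfun_le _ _)
  -- the filter
  let x : (ℕ → Bool) → (P → Bool) := fun s p => @decide (∃ n, c s n ≤ p) (Classical.propDecidable _)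
  have hx_iff : ∀ s p, x s p = true ↔ ∃ n, c s n ≤ p := by
    intro s p; simp [x]
  have hx_gen : ∀ s, x s ∈ Gen P 𝒟 := by
    intro s
    refine ⟨⟨?_, ?_⟩, ?_⟩
    · intro p q hp hpq
      obtain ⟨n, hn⟩ := (hx_iff s p).1 hp
      exact (hx_iff s q).2 ⟨n, le_trans hn hpq⟩
    · intro p q hp hq
      obtain ⟨n, hn⟩ := (hx_iff s p).1 hp
      obtain ⟨m, hm⟩ := (hx_iff s q).1 hq
      refine ⟨c s (max n m), (hx_iff s _).2 ⟨max n m, le_refl _⟩,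
        le_trans (hc_anti s (le_max_left n m)) hn,
        le_trans (hc_anti s (le_max_right n m)) hm⟩
    · intro D hD
      obtain ⟨n, rfl⟩ : ∃ n, Dfun n = D := by
        have := hDfun ▸ hD; exact this
      refine ⟨dfun (c s n) n, hdfun_mem _ _, (hx_iff s _).2 ⟨n + 1, ?_⟩⟩
      rw [hc_succ]
      exact hchild_le _ _ _
  -- agreement below the first difference
  have hc_agree : ∀ s t : ℕ → Bool, ∀ n, (∀ k < n, s k = t k) → c s n = c t n := by
    intro s t n
    induction n with
    | zero => intro _; rfl
    | succ n ih =>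
      intro h
      rw [hc_succ, hc_succ, ih (fun k hk => h k (Nat.lt_succ_of_lt hk)),
        h n (Nat.lt_succ_self n)]
  -- injectivity
  have hx_inj : Function.Injective x := by
    intro s t hst
    by_contra hs
    have hex : ∃ n, s n ≠ t n := by
      by_contra h
      push_neg at h
      exact hs (funext h)
    set n := Nat.find hex with hn
    have hlt : ∀ k < n, s k = t k := fun k hk => by
      by_contra h; exact Nat.find_min hex hk h
    have hceq : c s n = c t n := hc_agree s t n hlt
    have hsn : s n ≠ t n := Nat.find_spec hex
    have h1 : x s (c s (n + 1)) = true := (hx_iff s _).2 ⟨n + 1, le_refl _⟩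
    have h2 : x t (c s (n + 1)) = true := by rw [← hst]; exact h1
    obtain ⟨m, hm⟩ := (hx_iff t _).1 h2
    -- c t (max m (n+1)) witnesses compatibility of the two incompatible children
    apply hchild_incompat (c s n) n (s n) (t n) hsn
    refine ⟨c t (max m (n + 1)), ?_, ?_⟩
    · rw [← hc_succ]
      exact le_trans (hc_anti t (le_max_left m (n + 1))) hm
    · calc c t (max m (n + 1)) ≤ c t (n + 1) := hc_anti t (le_max_right m (n + 1))
        _ = child (c s n) n (t n) := by rw [hc_succ, hceq]
  -- conclude
  intro hcount
  have : Countable (ℕ → Bool) := by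
    have : Countable (Gen P 𝒟) := hcount.to_subtype
    exact Function.Injective.countable (f := fun s => (⟨x s, hx_gen s⟩ : Gen P 𝒟))
      (fun a b hab => hx_inj (congrArg Subtype.val hab))
  have hSetN : Countable (Set ℕ) :=
    Function.Injective.countable (α := Set ℕ) (β := ℕ → Bool)
      (Equiv.injective (Equiv.piCongrRight fun _ : ℕ => Equiv.propEquivBool))
  obtain ⟨f, hf⟩ := hSetN.exists_injective_nat
  exact Function.cantor_injective f hf
end

section
/- Let P be a nonempty countable partial order, let 𝒟 be a countable family of dense subsets of P such that Max_p ∈ 𝒟 for every p ∈ P, and let Γ be a countable group of order automorphisms of P such that e''D ∈ 𝒟 for every e ∈ Γ and D ∈ 𝒟. Let Γ act on the Polish space X = Gen(P,𝒟) by e·G = e''G. Then the following are equivalent: (a) every Γ-invariant Borel subset of X is meager in X or comeager in X (the action is generically ergodic); (b) for all p, q ∈ P there exists e ∈ Γ such that e(p) and q are compatible (P is weakly homogeneous with respect to Γ). -/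
/-- The image of (the characteristic function of) a set `x : P → Bool` under an order
automorphism `e` of `P`:  `p ∈ e''x ↔ e⁻¹(p) ∈ x`. -/
def imageUnder {P : Type*} [PartialOrder P] (e : P ≃o P) (x : P → Bool) : P → Bool :=
  fun p => x (e.symm p)

open Set Topology Filter

section Aux

variable {P : Type*} [PartialOrder P]

/-- Rasiowa–Sikorski: generic filter through `p₀` meeting a countable family of dense sets. -/
lemma exists_generic (𝒮 : Set (Set P)) (hc : 𝒮.Countable)
    (hd : ∀ D ∈ 𝒮, DenseBelow D) (p₀ : P) :
    ∃ x : P → Bool, IsPOFilter x ∧ x p₀ = true ∧ ∀ D ∈ 𝒮, ∃ p ∈ D, x p = true := by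
  classical
  obtain ⟨f, hf⟩ : ∃ f : ℕ → Set P, insert Set.univ 𝒮 = Set.range f :=
    (hc.insert _).exists_eq_range (insert_nonempty _ _)
  have hfd : ∀ n, DenseBelow (f n) := by
    intro n
    have hmem : f n ∈ insert Set.univ 𝒮 := hf ▸ mem_range_self n
    rcases hmem with h | h
    · intro p; exact ⟨p, by simp [h], le_refl p⟩
    · exact hd _ h
  choose g hg1 hg2 using hfd
  let seq : ℕ → P := fun n => Nat.rec p₀ (fun n q => g n q) n
  have hseq : ∀ n, seq (n + 1) ≤ seq n := fun n => hg2 n _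
  have hanti : Antitone seq := antitone_nat_of_succ_le hseq
  refine ⟨fun q => @decide (∃ n, seq n ≤ q) (Classical.propDecidable _), ⟨?_, ?_⟩, ?_, ?_⟩
  · intro p q hp hpq
    simp only [decide_eq_true_eq] at hp ⊢
    obtain ⟨n, hn⟩ := hp
    exact ⟨n, hn.trans hpq⟩
  · intro p q hp hq
    simp only [decide_eq_true_eq] at hp hq ⊢
    obtain ⟨n, hn⟩ := hp
    obtain ⟨m, hm⟩ := hq
    exact ⟨seq (max n m), ⟨max n m, le_refl _⟩,
      (hanti (le_max_left n m)).trans hn, (hanti (le_max_right n m)).trans hm⟩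
  · simp only [decide_eq_true_eq]
    exact ⟨0, le_refl _⟩
  · intro D hD
    have : D ∈ Set.range f := hf ▸ mem_insert_of_mem _ hD
    obtain ⟨n, rfl⟩ := this
    refine ⟨seq (n + 1), hg1 n _, ?_⟩
    simp only [decide_eq_true_eq]
    exact ⟨n + 1, le_refl _⟩

variable (𝒟 : Set (Set P))

/-- The basic open set of generic filters containing `p`. -/
def UpSet (p : P) : Set ↥(Gen P 𝒟) := {G | (G : P → Bool) p = true}

lemma upSet_open (p : P) : IsOpen (UpSet 𝒟 p) := by
  have h : UpSet 𝒟 p = (fun G : ↥(Gen P 𝒟) => (G : P → Bool) p) ⁻¹' {true} := by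
    ext G; simp [UpSet]
  rw [h]
  exact (isOpen_discrete _).preimage ((continuous_apply p).comp continuous_subtype_val)

lemma upSet_mono {p q : P} (h : p ≤ q) : UpSet 𝒟 p ⊆ UpSet 𝒟 q := by
  intro G hG
  exact G.2.1.1 p q hG h

variable {𝒟}
variable (h𝒟 : 𝒟.Countable) (hdense : ∀ D ∈ 𝒟, DenseBelow D) (hmax : ∀ p : P, MaxSet p ∈ 𝒟)

include h𝒟 hdense in
lemma upSet_nonempty (p : P) : (UpSet 𝒟 p).Nonempty := by
  obtain ⟨x, hfil, hxp, hmeets⟩ := exists_generic 𝒟 h𝒟 hdense p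
  exact ⟨⟨x, hfil, hmeets⟩, hxp⟩

include hmax in
lemma filter_nonempty [Nonempty P] {x : P → Bool} (hx : x ∈ Gen P 𝒟) : ∃ p, x p = true := by
  obtain ⟨q, _, hq⟩ := hx.2 _ (hmax (Classical.arbitrary P))
  exact ⟨q, hq⟩

include hmax in
lemma finset_lower_bound [Nonempty P] {x : P → Bool} (hx : x ∈ Gen P 𝒟) (s : Finset P)
    (h : ∀ i ∈ s, x i = true) : ∃ p, x p = true ∧ ∀ i ∈ s, p ≤ i := by
  classical
  induction s using Finset.induction_on with
  | empty =>
    obtain ⟨p, hp⟩ := filter_nonempty hmax hx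
    exact ⟨p, hp, by simp⟩
  | @insert a s ha ih =>
    obtain ⟨p, hp, hps⟩ := ih (fun i hi => h i (Finset.mem_insert_of_mem hi))
    have hxa : x a = true := h a (Finset.mem_insert_self a s)
    obtain ⟨r, hr, hra, hrp⟩ := hx.1.2 a p hxa hp
    exact ⟨r, hr, fun i hi => by
      rcases Finset.mem_insert.mp hi with rfl | hi
      · exact hra
      · exact hrp.trans (hps i hi)⟩

include hmax in
/-- Key lemma: a single condition in a generic filter decides finitely many coordinates. -/
lemma decides [Nonempty P] {x : P → Bool} (hx : x ∈ Gen P 𝒟) (I : Finset P) :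
    ∃ p, x p = true ∧ ∀ y ∈ Gen P 𝒟, y p = true → ∀ i ∈ I, y i = x i := by
  classical
  have hq : ∀ i : P, ∃ q, x q = true ∧ (q ≤ i ∨ ¬ Compat q i) := by
    intro i
    obtain ⟨q, hqm, hqx⟩ := hx.2 _ (hmax i)
    exact ⟨q, hqx, hqm⟩
  choose qf hq1 hq2 using hq
  obtain ⟨p, hp, hps⟩ := finset_lower_bound hmax hx (I.image qf)
    (fun j hj => by obtain ⟨i, _, rfl⟩ := Finset.mem_image.mp hj; exact hq1 i)
  have hple : ∀ i ∈ I, p ≤ qf i := fun i hi => hps _ (Finset.mem_image_of_mem qf hi)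
  refine ⟨p, hp, fun y hy hyp i hi => ?_⟩
  rcases hq2 i with hle | hinc
  · -- qf i ≤ i, so both x i and y i are true
    have hxi : x i = true := hx.1.1 (qf i) i (hq1 i) hle
    have hyi : y i = true := hy.1.1 p i hyp ((hple i hi).trans hle)
    rw [hyi, hxi]
  · -- qf i ⊥ i, so both x i and y i are false
    have hxi : x i = false := by
      by_contra h
      have hxi : x i = true := by
        revert h; cases x i <;> simp
      obtain ⟨r, _, hr1, hr2⟩ := hx.1.2 (qf i) i (hq1 i) hxi
      exact hinc ⟨r, hr1, hr2⟩
    have hyi : y i = false := by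
      by_contra h
      have hyi : y i = true := by
        revert h; cases y i <;> simp
      obtain ⟨r, _, hr1, hr2⟩ := hy.1.2 p i hyp hyi
      exact hinc ⟨r, hr1.trans (hple i hi), hr2⟩
    rw [hyi, hxi]

include hmax in
/-- The sets `UpSet p` form a π-basis for the topology on `Gen P 𝒟`. -/
lemma pibasis [Nonempty P] {U : Set ↥(Gen P 𝒟)} (hU : IsOpen U) {G : ↥(Gen P 𝒟)} (hG : G ∈ U) :
    ∃ p, (G : P → Bool) p = true ∧ UpSet 𝒟 p ⊆ U := by
  obtain ⟨V, hV, rfl⟩ := isOpen_induced_iff.mp hU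
  obtain ⟨I, u, h1, h2⟩ := isOpen_pi_iff.mp hV (G : P → Bool) hG
  obtain ⟨p, hp, hdec⟩ := decides hmax G.2 I
  refine ⟨p, hp, fun H hH => ?_⟩
  refine h2 ?_
  intro i hi
  rw [hdec (H : P → Bool) H.2 hH i hi]
  exact (h1 i hi).2

include h𝒟 hdense hmax in
/-- `Gen P 𝒟` is a Baire space. -/
lemma baire_gen [Countable P] [Nonempty P] : BaireSpace ↥(Gen P 𝒟) := by
  constructor
  intro f ho hd
  rw [dense_iff_inter_open]
  rintro V hV ⟨G, hG⟩
  obtain ⟨p₀, _, hsub⟩ := pibasis hmax hV hG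
  set Dn : ℕ → Set P := fun n => {r | UpSet 𝒟 r ⊆ f n} with hDn
  have hDd : ∀ n, DenseBelow (Dn n) := by
    intro n p
    obtain ⟨G', hG'⟩ := (dense_iff_inter_open.mp (hd n)) (UpSet 𝒟 p) (upSet_open 𝒟 p)
      (upSet_nonempty h𝒟 hdense p)
    obtain ⟨q, hq, hq2⟩ := pibasis hmax (ho n) hG'.2
    obtain ⟨r, hr, hrq, hrp⟩ := G'.2.1.2 q p hq hG'.1
    exact ⟨r, (upSet_mono 𝒟 hrq).trans hq2, hrp⟩
  obtain ⟨x, hfil, hxp₀, hmeets⟩ := exists_generic (𝒟 ∪ Set.range Dn)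
    (h𝒟.union (countable_range _))
    (by rintro D (hD | ⟨n, rfl⟩)
        · exact hdense D hD
        · exact hDd n) p₀
  refine ⟨⟨x, hfil, fun D hD => hmeets D (Or.inl hD)⟩, hsub hxp₀, ?_⟩
  rw [mem_iInter]
  intro n
  obtain ⟨r, hrD, hxr⟩ := hmeets (Dn n) (Or.inr ⟨n, rfl⟩)
  exact hrD hxr

/-- The image of a generic filter under an automorphism preserving `𝒟` is generic. -/
lemma mapGen_mem (e : P ≃o P) (he : ∀ D ∈ 𝒟, ⇑e.symm '' D ∈ 𝒟) {x : P → Bool}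
    (hx : x ∈ Gen P 𝒟) : imageUnder e x ∈ Gen P 𝒟 := by
  refine ⟨⟨?_, ?_⟩, ?_⟩
  · intro p q hp hpq
    exact hx.1.1 _ _ hp (e.symm.monotone hpq)
  · intro p q hp hq
    obtain ⟨r, hr, hr1, hr2⟩ := hx.1.2 _ _ hp hq
    refine ⟨e r, ?_, ?_, ?_⟩
    · show x (e.symm (e r)) = true
      rwa [e.symm_apply_apply]
    · have h := e.monotone hr1
      rwa [e.apply_symm_apply] at h
    · have h := e.monotone hr2
      rwa [e.apply_symm_apply] at h
  · intro D hD
    obtain ⟨q, ⟨d, hd, rfl⟩, hq⟩ := hx.2 _ (he D hD)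
    refine ⟨d, hd, ?_⟩
    show x (e.symm d) = true
    exact hq


variable (Γ : Subgroup (P ≃o P)) (hclosed : ∀ e ∈ Γ, ∀ D ∈ 𝒟, (⇑e '' D) ∈ 𝒟)

include hclosed in
lemma symm_closed (e : Γ) : ∀ D ∈ 𝒟, ⇑(e : P ≃o P).symm '' D ∈ 𝒟 := by
  intro D hD
  exact hclosed (↑(e⁻¹)) (e⁻¹).2 D hD

/-- The homeomorphism of `Gen P 𝒟` induced by an automorphism in `Γ`. -/
def phiH (e : Γ) : ↥(Gen P 𝒟) ≃ₜ ↥(Gen P 𝒟) where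
  toFun G := ⟨imageUnder (e : P ≃o P) G, mapGen_mem _ (symm_closed Γ hclosed e) G.2⟩
  invFun G := ⟨imageUnder ((e⁻¹ : Γ) : P ≃o P) G, mapGen_mem _ (symm_closed Γ hclosed e⁻¹) G.2⟩
  left_inv G := by
    refine Subtype.ext (funext fun p => ?_)
    show (G : P → Bool) ((e : P ≃o P).symm (((e⁻¹ : Γ) : P ≃o P).symm p)) = (G : P → Bool) p
    have h : ((e⁻¹ : Γ) : P ≃o P).symm p = (e : P ≃o P) p := rfl
    rw [h, OrderIso.symm_apply_apply]
  right_inv G := by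
    refine Subtype.ext (funext fun p => ?_)
    show (G : P → Bool) (((e⁻¹ : Γ) : P ≃o P).symm ((e : P ≃o P).symm p)) = (G : P → Bool) p
    have h : ∀ q, ((e⁻¹ : Γ) : P ≃o P).symm q = (e : P ≃o P) q := fun _ => rfl
    rw [h, OrderIso.apply_symm_apply]
  continuous_toFun := by
    refine Continuous.subtype_mk ?_ _
    exact continuous_pi fun p => (continuous_apply _).comp continuous_subtype_val
  continuous_invFun := by
    refine Continuous.subtype_mk ?_ _
    exact continuous_pi fun p => (continuous_apply _).comp continuous_subtype_val

lemma phiH_inv_apply (e : Γ) (G : ↥(Gen P 𝒟)) :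
    phiH Γ hclosed e⁻¹ G = (phiH Γ hclosed e).symm G := by
  refine Subtype.ext (funext fun p => ?_)
  rfl

end Aux

/-- Let `P` be a nonempty countable partial order, `𝒟` a countable family of dense
subsets of `P` containing `Max_p` for every `p`, and `Γ` a countable group of order
automorphisms of `P` with `e''D ∈ 𝒟` for every `e ∈ Γ`, `D ∈ 𝒟`, acting on the Polish
space `X = Gen(P,𝒟)` by `e·G = e''G`.  Then the action is generically ergodic (every
`Γ`-invariant Borel subset of `X` is meager or comeager) if and only if `P` is weakly
homogeneous with respect to `Γ` (for all `p, q ∈ P` there is `e ∈ Γ` with `e(p)`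
compatible with `q`). -/
theorem stmt9 {P : Type*} [PartialOrder P] [Countable P] [Nonempty P]
    (𝒟 : Set (Set P)) (h𝒟 : 𝒟.Countable) (hdense : ∀ D ∈ 𝒟, DenseBelow D)
    (hmax : ∀ p : P, MaxSet p ∈ 𝒟)
    (Γ : Subgroup (P ≃o P)) (hΓcount : Countable Γ)
    (hclosed : ∀ e ∈ Γ, ∀ D ∈ 𝒟, (⇑e '' D) ∈ 𝒟) :
    (∀ A : Set (Gen P 𝒟), @MeasurableSet (Gen P 𝒟) (borel (Gen P 𝒟)) A →
        (∀ G ∈ A, ∀ e ∈ Γ, ∀ G' : Gen P 𝒟,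
          (G' : P → Bool) = imageUnder e (G : P → Bool) → G' ∈ A) →
        (IsMeagre A ∨ IsMeagre Aᶜ)) ↔
    (∀ p q : P, ∃ e ∈ Γ, Compat (e p) q) := by
    classical
  haveI := hΓcount
  haveI : BaireSpace ↥(Gen P 𝒟) := baire_gen h𝒟 hdense hmax
  letI : MeasurableSpace ↥(Gen P 𝒟) := borel _
  haveI : BorelSpace ↥(Gen P 𝒟) := ⟨rfl⟩
  constructor
  · -- generic ergodicity → weak homogeneity
    intro ha p q
    by_contra hcon
    push_neg at hcon
    set A : Set ↥(Gen P 𝒟) := {G | ∃ e ∈ Γ, (G : P → Bool) (e p) = true} with hA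
    have hAopen : IsOpen A := by
      have h : A = ⋃ (e : Γ), UpSet 𝒟 ((e : P ≃o P) p) := by
        ext G
        constructor
        · rintro ⟨e, he, h⟩; exact mem_iUnion.2 ⟨⟨e, he⟩, h⟩
        · intro h; obtain ⟨⟨e, he⟩, h⟩ := mem_iUnion.1 h; exact ⟨e, he, h⟩
      rw [h]
      exact isOpen_iUnion fun e => upSet_open 𝒟 _
    have hinv : ∀ G ∈ A, ∀ e ∈ Γ, ∀ G' : Gen P 𝒟,
        (G' : P → Bool) = imageUnder e (G : P → Bool) → G' ∈ A := by
      rintro G ⟨f, hf, hGf⟩ e he G' hG'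
      refine ⟨e * f, mul_mem he hf, ?_⟩
      rw [hG']
      show (G : P → Bool) (e.symm ((e * f) p)) = true
      have h : e.symm ((e * f) p) = f p := e.symm_apply_apply _
      rw [h]; exact hGf
    rcases ha A hAopen.measurableSet hinv with hm | hm
    · have hsub : UpSet 𝒟 p ⊆ A := fun G hG => ⟨1, one_mem Γ, hG⟩
      have hd : Dense (UpSet 𝒟 p)ᶜ := dense_of_mem_residual (hm.mono hsub)
      obtain ⟨G, hG1, hG2⟩ := hd.inter_open_nonempty _ (upSet_open 𝒟 p)
        (upSet_nonempty h𝒟 hdense p)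
      exact hG2 hG1
    · have hsub : UpSet 𝒟 q ⊆ Aᶜ := by
        rintro G hG ⟨e, he, hGe⟩
        obtain ⟨r, _, hr1, hr2⟩ := G.2.1.2 _ _ hGe hG
        exact hcon e he ⟨r, hr1, hr2⟩
      have hd : Dense (UpSet 𝒟 q)ᶜ := dense_of_mem_residual (hm.mono hsub)
      obtain ⟨G, hG1, hG2⟩ := hd.inter_open_nonempty _ (upSet_open 𝒟 q)
        (upSet_nonempty h𝒟 hdense q)
      exact hG2 hG1
  · -- weak homogeneity → generic ergodicity
    intro hb A hAmeas hinv
    set Φ : Γ → (↥(Gen P 𝒟) ≃ₜ ↥(Gen P 𝒟)) := phiH Γ hclosed with hΦ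
    have hΦAsub : ∀ e : Γ, Φ e '' A ⊆ A := by
      rintro e G' ⟨G, hG, rfl⟩
      exact hinv G hG e.1 e.2 (Φ e G) rfl
    have hΦA : ∀ e : Γ, Φ e '' A = A := by
      intro e
      refine subset_antisymm (hΦAsub e) (fun G hG => ?_)
      refine ⟨Φ e⁻¹ G, hΦAsub e⁻¹ ⟨G, hG, rfl⟩, ?_⟩
      rw [hΦ, phiH_inv_apply]
      exact (Φ e).apply_symm_apply G
    obtain ⟨U, hUopen, hAU⟩ := hAmeas.baireMeasurableSet.residualEq_isOpen
    rcases eq_empty_or_nonempty U with rfl | ⟨G₀, hG₀⟩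
    · left
      rw [IsMeagre]
      filter_upwards [hAU] with x hx
      intro hmem
      exact notMem_empty x (hx.mp hmem)
    · right
      set W := ⋃ (e : Γ), Φ e '' U with hW
      have hWopen : IsOpen W := isOpen_iUnion fun e => (Φ e).isOpenMap _ hUopen
      have hWdense : Dense W := by
        rw [dense_iff_inter_open]
        rintro V hV ⟨G, hGV⟩
        obtain ⟨q', hGq', hq'sub⟩ := pibasis hmax hV hGV
        obtain ⟨p', hGp', hp'sub⟩ := pibasis hmax hUopen hG₀
        obtain ⟨e, he, r, hr1, hr2⟩ := hb p' q'
        obtain ⟨G', hG'r⟩ := upSet_nonempty h𝒟 hdense r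
        have hG'q' : G' ∈ UpSet 𝒟 q' := upSet_mono 𝒟 hr2 hG'r
        have hG'ep : (G' : P → Bool) (e p') = true := G'.2.1.1 r (e p') hG'r hr1
        have hmem : Φ (⟨e, he⟩ : Γ)⁻¹ G' ∈ UpSet 𝒟 p' := by
          show (G' : P → Bool) ((((⟨e, he⟩ : Γ)⁻¹ : Γ) : P ≃o P).symm p') = true
          exact hG'ep
        refine ⟨G', ⟨hq'sub hG'q', ?_⟩⟩
        refine mem_iUnion.2 ⟨⟨e, he⟩, ?_⟩
        refine ⟨Φ (⟨e, he⟩ : Γ)⁻¹ G', hp'sub hmem, ?_⟩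
        rw [hΦ, phiH_inv_apply]
        exact (Φ _).apply_symm_apply G'
      have hWcm : IsMeagre Wᶜ := by
        rw [IsMeagre, compl_compl]
        exact residual_of_dense_open hWopen hWdense
      have hUA : IsMeagre (U \ A) := by
        rw [IsMeagre]
        filter_upwards [hAU] with x hx
        intro hmem
        exact hmem.2 (hx.mpr hmem.1)
      have hdiff : ∀ e : Γ, IsMeagre ((Φ e) '' U \ A) := by
        intro e
        have h2 : (Φ e) '' U \ A = (Φ e) '' (U \ A) := by
          conv_lhs => rw [← hΦA e]
          exact (image_diff (Φ e).injective U A).symm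
        have h3 : (Φ e) '' (U \ A) = (Φ e).symm ⁻¹' (U \ A) :=
          congrFun (Homeomorph.preimage_symm (Φ e)).symm _
        rw [h2, h3]
        exact hUA.preimage_of_isOpenMap (Φ e).symm.continuous (Φ e).symm.isOpenMap
      have hWA : IsMeagre (W \ A) := by
        rw [IsMeagre, hW, iUnion_diff, compl_iUnion]
        exact countable_iInter_mem.mpr fun e => hdiff e
      have hsub : Aᶜ ⊆ (W \ A) ∪ Wᶜ := by
        intro x hx
        by_cases h : x ∈ W
        · exact Or.inl ⟨h, hx⟩
        · exact Or.inr h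
      have hm : IsMeagre ((W \ A) ∪ Wᶜ) := by
        rw [IsMeagre, compl_union]
        exact inter_mem hWA hWcm
      exact hm.mono hsub
end

section
/- Let μ be the Bernoulli measure on Cantor space 2^ω. For all measurable sets A, B ⊆ 2^ω with μ(A) > 0 and μ(B) > 0, there exists s ∈ 2^ω with finite support (s(n) is false for all but finitely many n) such that μ((s + A) ∩ B) > 0, where s + A = {s + x : x ∈ A} and + denotes coordinatewise addition mod 2 (xor). -/
open MeasureTheory

/-- `μ` is the Bernoulli measure on `ι → Bool`: the product over `ι` of the uniform
probability measure on `Bool`.  It is characterized as the unique probability measure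
giving each cylinder determined by values on a finite set `s` measure `(1/2)^|s|`. -/
def IsBernoulliMeasure {ι : Type*} (μ : Measure (ι → Bool)) : Prop :=
  IsProbabilityMeasure μ ∧
    ∀ (s : Finset ι) (f : ι → Bool),
      μ {x : ι → Bool | ∀ i ∈ s, x i = f i} = (2 : ENNReal)⁻¹ ^ s.card

/-- The translate `s + A` of a set `A ⊆ 2^ω` by `s ∈ 2^ω`, where `+` is coordinatewise
addition mod 2 (xor). -/
def xorTranslate (s : ℕ → Bool) (A : Set (ℕ → Bool)) : Set (ℕ → Bool) :=
  (fun x : ℕ → Bool => fun n => xor (s n) (x n)) '' A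

/-!
The points that differ from a point of `A` in finitely many coordinates form the union `T` of
the countably many translates of `A` by finitely supported `s`. So `T` is measurable, and since
membership in `T` does not depend on any finite set of coordinates, `T` is a tail event of the
independent coordinates. By Kolmogorov's 0-1 law and `μ T ≥ μ A > 0`, `T` is conull, so
`μ (T ∩ B) = μ B > 0`, and one of the translates `s + A` already meets `B` in positive measure.
-/

open ProbabilityTheory Filter

lemma IsBernoulliMeasure.iIndep_comap_eval {ι : Type*} {μ : Measure (ι → Bool)}
    (hμ : IsBernoulliMeasure μ) :
    iIndep (fun i => MeasurableSpace.comap (fun x : ι → Bool => x i) inferInstance) μ := by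
  have hcyl (S : Finset ι) : μ (⋂ i ∈ S, {x | x i = true}) = (2 : ENNReal)⁻¹ ^ S.card := by
    rw [← hμ.2 S fun _ => true]
    congr 1
    ext x
    simp
  have hcoord (i : ι) : μ {x | x i = true} = 2⁻¹ := by simpa using hcyl {i}
  refine iIndepSets.iIndep (fun i => (measurable_pi_apply i).comap_le)
    (fun i => {{x | x i = true}}) (fun _ => .singleton _) (fun i => le_antisymm ?_ ?_) ?_
  · refine Measurable.comap_le (measurable_to_bool ?_)
    exact MeasurableSpace.measurableSet_generateFrom rfl
  · exact MeasurableSpace.generateFrom_le fun _ h => h ▸ ⟨{true}, trivial, rfl⟩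
  · refine iIndepSets_singleton_iff.2 fun S => ?_
    simp_rw [hcyl, hcoord, Finset.prod_const]

lemma measurableSet_limsup_comap_eval_of_invariant {β : Type*} [MeasurableSpace β]
    {t : Set (ℕ → β)} (ht : MeasurableSet t) (hinv : ∀ x y, x =ᶠ[cofinite] y → x ∈ t → y ∈ t) :
    MeasurableSet[limsup (fun n => MeasurableSpace.comap (fun x : ℕ → β => x n) inferInstance)
      atTop] t := by
  rcases t.eq_empty_or_nonempty with rfl | ⟨z, -⟩
  · exact MeasurableSpace.measurableSet_empty _
  rw [limsup_eq_iInf_iSup_of_nat, MeasurableSpace.measurableSet_iInf]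
  intro n
  let g : (ℕ → β) → ℕ → β := fun x i => if i < n then z i else x i
  have hg_eq (x : ℕ → β) : g x =ᶠ[cofinite] x := by
    rw [Nat.cofinite_eq_atTop]
    filter_upwards [eventually_ge_atTop n] with i hi
    simp [g, not_lt.2 hi]
  have hg : Measurable[⨆ i ≥ n, MeasurableSpace.comap (fun x : ℕ → β => x i) inferInstance] g := by
    refine @measurable_pi_lambda _ _ _ (_) _ g fun i => ?_
    by_cases hi : i < n
    · simp only [g, hi, if_true]
      exact measurable_const
    · simp only [g, hi, if_false]
      exact (comap_measurable _).mono (le_iSup₂_of_le i (not_lt.1 hi) le_rfl) le_rfl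
  have hgt : g ⁻¹' t = t :=
    Set.ext fun x => ⟨hinv _ _ (hg_eq x), hinv _ _ (hg_eq x).symm⟩
  exact hgt ▸ hg ht

lemma IsBernoulliMeasure.measure_eq_zero_or_one_of_invariant {μ : Measure (ℕ → Bool)}
    (hμ : IsBernoulliMeasure μ) {t : Set (ℕ → Bool)} (ht : MeasurableSet t)
    (hinv : ∀ x y, x =ᶠ[cofinite] y → x ∈ t → y ∈ t) : μ t = 0 ∨ μ t = 1 :=
  measure_zero_or_one_of_measurableSet_limsup_atTop (fun i => (measurable_pi_apply i).comap_le)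
    hμ.iIndep_comap_eval (measurableSet_limsup_comap_eval_of_invariant ht hinv)

lemma xorTranslate_eq_preimage (s : ℕ → Bool) (A : Set (ℕ → Bool)) :
    xorTranslate s A = (fun x n => xor (s n) (x n)) ⁻¹' A :=
  congrFun (Function.Involutive.image_eq_preimage_symm fun x => by simp) A

lemma MeasurableSet.xorTranslate {A : Set (ℕ → Bool)} (hA : MeasurableSet A) (s : ℕ → Bool) :
    MeasurableSet (xorTranslate s A) := by
  rw [xorTranslate_eq_preimage]
  exact measurable_pi_lambda (fun (x : ℕ → Bool) n => xor (s n) (x n))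
    (fun n => (measurable_from_top (f := xor (s n))).comp (measurable_pi_apply n)) hA

def cofiniteSaturation (A : Set (ℕ → Bool)) : Set (ℕ → Bool) :=
  ⋃ e : Finset ℕ, xorTranslate (fun n => decide (n ∈ e)) A

lemma mem_cofiniteSaturation {A : Set (ℕ → Bool)} {x : ℕ → Bool} :
    x ∈ cofiniteSaturation A ↔ ∃ y ∈ A, y =ᶠ[cofinite] x := by
  simp only [cofiniteSaturation, xorTranslate, Set.mem_iUnion, Set.mem_image]
  constructor
  · rintro ⟨e, y, hy, rfl⟩
    refine ⟨y, hy, ?_⟩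
    filter_upwards [e.eventually_cofinite_notMem] with n hn
    simp [hn]
  · rintro ⟨y, hy, hyx⟩
    refine ⟨(eventually_cofinite.1 hyx).toFinset, y, hy, funext fun n => ?_⟩
    by_cases h : y n = x n
    · simp [h]
    · simp [Bool.eq_not.2 h]

lemma MeasurableSet.cofiniteSaturation {A : Set (ℕ → Bool)} (hA : MeasurableSet A) :
    MeasurableSet (cofiniteSaturation A) :=
  .iUnion fun _ => hA.xorTranslate _

lemma IsBernoulliMeasure.measure_cofiniteSaturation {μ : Measure (ℕ → Bool)}
    (hμ : IsBernoulliMeasure μ) {A : Set (ℕ → Bool)} (hA : MeasurableSet A) (hApos : 0 < μ A) :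
    μ (cofiniteSaturation A) = 1 := by
  refine (hμ.measure_eq_zero_or_one_of_invariant hA.cofiniteSaturation
    fun x y hxy hx => ?_).resolve_left ?_
  · obtain ⟨z, hz, hzx⟩ := mem_cofiniteSaturation.1 hx
    exact mem_cofiniteSaturation.2 ⟨z, hz, hzx.trans hxy⟩
  · exact (hApos.trans_le
      (measure_mono fun x hx => mem_cofiniteSaturation.2 ⟨x, hx, .rfl⟩)).ne'

theorem stmt12_general (μ : Measure (ℕ → Bool)) (hμ : IsBernoulliMeasure μ)
    (A B : Set (ℕ → Bool)) (hA : MeasurableSet A)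
    (hApos : 0 < μ A) (hBpos : 0 < μ B) :
    ∃ s : ℕ → Bool, {n : ℕ | s n = true}.Finite ∧
      0 < μ (xorTranslate s A ∩ B) := by
  have := hμ.1
  have hsat : μ (cofiniteSaturation A ∩ B) = μ B := by
    rw [Set.inter_comm]
    exact measure_inter_conull ((prob_compl_eq_zero_iff hA.cofiniteSaturation).2
      (hμ.measure_cofiniteSaturation hA hApos))
  obtain ⟨e, he⟩ : ∃ e : Finset ℕ, 0 < μ (xorTranslate (fun n => decide (n ∈ e)) A ∩ B) := by
    by_contra! h
    rw [cofiniteSaturation, Set.iUnion_inter,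
      measure_iUnion_null fun e => nonpos_iff_eq_zero.1 (h e)] at hsat
    exact hBpos.ne hsat
  exact ⟨_, by simp, he⟩

/-- Let `μ` be the Bernoulli measure on Cantor space `2^ω`.  For all measurable
`A, B ⊆ 2^ω` of positive measure there is an `s ∈ 2^ω` with finite support
(`s n = false` for all but finitely many `n`) such that `μ((s + A) ∩ B) > 0`,
where `+` is coordinatewise addition mod 2. -/
theorem stmt12 (μ : Measure (ℕ → Bool)) (hμ : IsBernoulliMeasure μ)
    (A B : Set (ℕ → Bool)) (hA : MeasurableSet A) (hB : MeasurableSet B)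
    (hApos : 0 < μ A) (hBpos : 0 < μ B) :
    ∃ s : ℕ → Bool, {n : ℕ | s n = true}.Finite ∧
      0 < μ (xorTranslate s A ∩ B) :=
  stmt12_general μ hμ A B hA hApos hBpos
end
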